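/- arXiv:1804.06388 — 2 statements merged into one kernel-verified Lean document; each statement's English description precedes it below -/
import Mathlib

section
/- Let n, m ≥ 1, let a ∈ ℝⁿ, H ∈ ℝ^{m×n}, d ∈ ℝᵐ, and let ς ∈ ℝᵐ have nonnegative entries. Let λ ∈ ℝ satisfy λ ≥ ‖Hᵀς − a‖_∞ (the supremum norm on ℝⁿ), and let ξ̂ ∈ ℝⁿ. Then for every ξ ∈ ℝⁿ with Hξ ≤ d (componentwise), ⟨a, ξ⟩ ≤ ⟨a, ξ̂⟩ + ⟨ς, d − Hξ̂⟩ + λ‖ξ − ξ̂‖₁, where ‖·‖₁ is the ℓ¹ norm on ℝⁿ. -/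
/-- Euclidean inner (dot) product on `ℝⁿ`. -/
def dotp {n : ℕ} (a b : Fin n → ℝ) : ℝ := ∑ i, a i * b i

/-- The ℓ¹ norm on `ℝⁿ`. -/
def l1norm {n : ℕ} (x : Fin n → ℝ) : ℝ := ∑ i, |x i|

/-- The ℓ∞ (supremum) norm on `ℝⁿ`. -/
noncomputable def linfnorm {n : ℕ} (x : Fin n → ℝ) : ℝ := ⨆ i, |x i|

/-- Pointwise certificate underlying the tractable reformulation of the
distributionally robust stochastic OPF: a nonnegative dual multiplier `ς`
robustifies the affine function `⟨a, ·⟩` over the polytope `{ξ : Hξ ≤ d}` at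
cost `λ` per unit of ℓ¹ distance from the sample point `ξ̂`. -/
theorem robustification_certificate {n m : ℕ} (hn : 1 ≤ n) (hm : 1 ≤ m)
    (a : Fin n → ℝ) (H : Matrix (Fin m) (Fin n) ℝ) (d : Fin m → ℝ)
    (ς : Fin m → ℝ) (hς : ∀ i, 0 ≤ ς i)
    (lam : ℝ) (hlam : linfnorm (H.transpose.mulVec ς - a) ≤ lam)
    (ξhat : Fin n → ℝ) :
    ∀ ξ : Fin n → ℝ, (∀ i, H.mulVec ξ i ≤ d i) →
      dotp a ξ ≤ dotp a ξhat + dotp ς (d - H.mulVec ξhat) + lam * l1norm (ξ - ξhat) := by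
  intro ξ hξ
  set w : Fin n → ℝ := H.transpose.mulVec ς - a with hw
  have hlam' : (⨆ i, |w i|) ≤ lam := hlam
  have hbound : ∀ j, |w j| ≤ lam := fun j =>
    le_trans (le_ciSup (f := fun i => |w i|) (Set.Finite.bddAbove (Set.finite_range _)) j) hlam'
  have comm : ∑ j, (∑ i, H i j * ς i) * (ξ j - ξhat j)
      = ∑ i, ς i * (H.mulVec ξ i - H.mulVec ξhat i) := by
    simp only [Matrix.mulVec, dotProduct, ← Finset.sum_sub_distrib, Finset.mul_sum,
      Finset.sum_mul]
    rw [Finset.sum_comm]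
    exact Finset.sum_congr rfl fun i _ => Finset.sum_congr rfl fun j _ => by ring
  have key : dotp a ξ = ∑ i, ς i * (H.mulVec ξ i - H.mulVec ξhat i)
      - (∑ j, w j * (ξ j - ξhat j)) + dotp a ξhat := by
    rw [← comm]
    simp only [dotp, hw, Pi.sub_apply, Matrix.mulVec, dotProduct, Matrix.transpose_apply,
      ← Finset.sum_sub_distrib, ← Finset.sum_add_distrib]
    exact Finset.sum_congr rfl fun j _ => by ring
  have h1 : ∑ i, ς i * (H.mulVec ξ i - H.mulVec ξhat i) ≤ dotp ς (d - H.mulVec ξhat) := by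
    apply Finset.sum_le_sum
    intro i _
    have := hξ i
    have := hς i
    simp only [Pi.sub_apply]
    nlinarith
  have h2 : -(∑ j, w j * (ξ j - ξhat j)) ≤ lam * l1norm (ξ - ξhat) := by
    rw [l1norm, Finset.mul_sum, ← Finset.sum_neg_distrib]
    apply Finset.sum_le_sum
    intro j _
    have h3 : |w j * (ξ j - ξhat j)| ≤ lam * |(ξ - ξhat) j| := by
      rw [abs_mul]
      exact mul_le_mul_of_nonneg_right (hbound j) (abs_nonneg _)
    have := neg_abs_le (w j * (ξ j - ξhat j))
    simp only [Pi.sub_apply] at *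
    linarith
  linarith [key, h1, h2]
end

section
/- Let n, m, N, K ≥ 1 and let Ξ = {ξ ∈ ℝⁿ : Hξ ≤ d} with H ∈ ℝ^{m×n}, d ∈ ℝᵐ. Let ξ̂₁, …, ξ̂_N ∈ Ξ and let P̂ = (1/N) Σᵢ δ_{ξ̂ᵢ} be the empirical distribution. Let Q be a probability measure supported on Ξ with finite first moment, let ε ≥ 0, and suppose d_W(P̂, Q) ≤ ε, where d_W is the dual-form Wasserstein distance with respect to the ℓ¹ norm. Suppose given vectors a_k ∈ ℝⁿ and scalars b_k ∈ ℝ for k = 1, …, K, a scalar λ ≥ 0, scalars s₁, …, s_N ∈ ℝ, and vectors ς_{ik} ∈ ℝᵐ with nonnegative entries such that for all i ≤ N and k ≤ K: b_k + ⟨a_k, ξ̂ᵢ⟩ + ⟨ς_{ik}, d − Hξ̂ᵢ⟩ ≤ sᵢ and ‖Hᵀς_{ik} − a_k‖_∞ ≤ λ. Then ∫_Ξ max_{k≤K} (⟨a_k, ξ⟩ + b_k) dQ(ξ) ≤ λ·ε + (1/N) Σ_{i=1}^N sᵢ. -/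
/-!
On the polytope `Ξ`, every affine piece `⟨a_k, ξ⟩ + b_k` is dominated by
`F ξ = minᵢ (sᵢ + λ‖ξ - ξ̂ᵢ‖₁)`: subtracting the nonnegative slack `⟨ς_{ik}, d - Hξ⟩` and using
`‖Hᵀς_{ik} - a_k‖_∞ ≤ λ` with Hölder's inequality reduces the claim to the first feasibility
constraint. Hence `∫ max_k (⟨a_k, ·⟩ + b_k) dQ ≤ ∫ F dQ`. The function `F` is `λ`-Lipschitz for
`‖·‖₁`, so the dual form of the Wasserstein distance gives `∫ F dQ ≤ ∫ F dP̂ + λε`, and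
`∫ F dP̂ = (1/N) Σᵢ F(ξ̂ᵢ) ≤ (1/N) Σᵢ sᵢ`.
-/

open MeasureTheory
open scoped ENNReal

/-- `f` is Lipschitz with constant 1 with respect to the ℓ¹ norm. -/
def LipschitzL1 {n : ℕ} (f : (Fin n → ℝ) → ℝ) : Prop :=
  ∀ x y, |f x - f y| ≤ l1norm (x - y)

/-- Dual-form Wasserstein distance with respect to the ℓ¹ norm. -/
noncomputable def wassersteinL1 {n : ℕ} (Q₁ Q₂ : Measure (Fin n → ℝ)) : ℝ :=
  sSup {r : ℝ | ∃ f : (Fin n → ℝ) → ℝ,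
    LipschitzL1 f ∧ r = (∫ ξ, f ξ ∂Q₁) - (∫ ξ, f ξ ∂Q₂)}

open scoped Matrix

section Norms

variable {n : ℕ}

lemma dotp_eq_dotProduct (a b : Fin n → ℝ) : dotp a b = a ⬝ᵥ b := rfl

lemma l1norm_nonneg (x : Fin n → ℝ) : 0 ≤ l1norm x :=
  Finset.sum_nonneg fun _ _ => abs_nonneg _

lemma l1norm_sub_comm (x y : Fin n → ℝ) : l1norm (x - y) = l1norm (y - x) :=
  Finset.sum_congr rfl fun i _ => abs_sub_comm (x i) (y i)

lemma l1norm_sub_le_l1norm_sub_add (x y c : Fin n → ℝ) :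
    l1norm (x - c) ≤ l1norm (y - c) + l1norm (x - y) := by
  rw [l1norm, l1norm, l1norm, ← Finset.sum_add_distrib]
  exact Finset.sum_le_sum fun i _ => (abs_sub_le (x i) (y i) (c i)).trans_eq (add_comm _ _)

lemma l1norm_le_card_mul_norm (x : Fin n → ℝ) : l1norm x ≤ n * ‖x‖ := by
  calc l1norm x ≤ ∑ _i : Fin n, ‖x‖ := Finset.sum_le_sum fun i _ => norm_le_pi_norm x i
    _ = n * ‖x‖ := by simp

lemma abs_le_linfnorm (x : Fin n → ℝ) (i : Fin n) : |x i| ≤ linfnorm x :=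
  le_ciSup (f := fun j => |x j|) (Set.finite_range _).bddAbove i

lemma linfnorm_nonneg (x : Fin n → ℝ) : 0 ≤ linfnorm x :=
  Real.iSup_nonneg fun _ => abs_nonneg _

lemma abs_dotp_le_linfnorm_mul_l1norm (x y : Fin n → ℝ) :
    |dotp x y| ≤ linfnorm x * l1norm y := by
  calc |dotp x y| ≤ ∑ i, |x i| * |y i| := by
        simpa only [dotp, abs_mul] using Finset.abs_sum_le_sum_abs (fun i => x i * y i) _
    _ ≤ linfnorm x * l1norm y := by
        rw [l1norm, Finset.mul_sum]
        exact Finset.sum_le_sum fun i _ =>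
          mul_le_mul_of_nonneg_right (abs_le_linfnorm x i) (abs_nonneg _)

end Norms

def LipschitzL1With {n : ℕ} (L : ℝ) (f : (Fin n → ℝ) → ℝ) : Prop :=
  ∀ x y, |f x - f y| ≤ L * l1norm (x - y)

namespace LipschitzL1With

variable {n : ℕ} {L : ℝ} {f : (Fin n → ℝ) → ℝ}

lemma of_le_add (h : ∀ x y, f x ≤ f y + L * l1norm (x - y)) : LipschitzL1With L f := by
  intro x y
  have hyx := h y x
  rw [l1norm_sub_comm] at hyx
  exact abs_sub_le_iff.mpr ⟨by linarith [h x y], by linarith⟩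

lemma le_add (hf : LipschitzL1With L f) (x y : Fin n → ℝ) : f x ≤ f y + L * l1norm (x - y) := by
  linarith [le_of_abs_le (hf x y)]

lemma mono {L' : ℝ} (hf : LipschitzL1With L f) (hLL' : L ≤ L') : LipschitzL1With L' f :=
  fun x y => (hf x y).trans (mul_le_mul_of_nonneg_right hLL' (l1norm_nonneg _))

lemma neg (hf : LipschitzL1With L f) : LipschitzL1With L (fun x => -f x) := fun x y => by
  simpa only [neg_sub_neg, abs_sub_comm] using hf x y

lemma const_add (hf : LipschitzL1With L f) (c : ℝ) : LipschitzL1With L (fun x => c + f x) :=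
  fun x y => by simpa only [add_sub_add_left_eq_sub] using hf x y

lemma add_const (hf : LipschitzL1With L f) (c : ℝ) : LipschitzL1With L (fun x => f x + c) :=
  fun x y => by simpa only [add_sub_add_right_eq_sub] using hf x y

lemma const_mul (hf : LipschitzL1With L f) {c : ℝ} (hc : 0 ≤ c) :
    LipschitzL1With (c * L) (fun x => c * f x) := fun x y => by
  rw [← mul_sub, abs_mul, abs_of_nonneg hc, mul_assoc]
  exact mul_le_mul_of_nonneg_left (hf x y) hc

lemma iInf {ι : Type*} [Finite ι] [Nonempty ι] {f : ι → (Fin n → ℝ) → ℝ}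
    (hf : ∀ i, LipschitzL1With L (f i)) : LipschitzL1With L (fun x => ⨅ i, f i x) :=
  of_le_add fun x y => by
    rw [← sub_le_iff_le_add]
    refine le_ciInf fun i => sub_le_iff_le_add.mpr ?_
    exact (ciInf_le (Set.finite_range _).bddBelow i).trans ((hf i).le_add x y)

lemma iSup {ι : Type*} [Finite ι] [Nonempty ι] {f : ι → (Fin n → ℝ) → ℝ}
    (hf : ∀ i, LipschitzL1With L (f i)) : LipschitzL1With L (fun x => ⨆ i, f i x) :=
  of_le_add fun x y => ciSup_le fun i => ((hf i).le_add x y).trans <|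
    (add_le_add_iff_right _).mpr (le_ciSup (f := fun i => f i y) (Set.finite_range _).bddAbove i)

lemma continuous (hf : LipschitzL1With L f) (hL : 0 ≤ L) : Continuous f := by
  refine (LipschitzWith.of_dist_le_mul (K := (L * n).toNNReal) fun x y => ?_).continuous
  rw [Real.dist_eq, Real.coe_toNNReal _ (by positivity), dist_eq_norm, mul_assoc]
  exact (hf x y).trans (mul_le_mul_of_nonneg_left (l1norm_le_card_mul_norm _) hL)

lemma integrable (hf : LipschitzL1With L f) (hL : 0 ≤ L) {Q : Measure (Fin n → ℝ)}
    [IsFiniteMeasure Q] (hQ : Integrable l1norm Q) : Integrable f Q := by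
  refine ((integrable_const |f 0|).add (hQ.const_mul L)).mono'
    (hf.continuous hL).aestronglyMeasurable (Filter.Eventually.of_forall fun x => ?_)
  have := hf x 0
  rw [sub_zero] at this
  show |f x| ≤ |f 0| + L * l1norm x
  linarith [abs_sub_abs_le_abs_sub (f x) (f 0)]

end LipschitzL1With

lemma lipschitzL1With_one_iff {n : ℕ} {f : (Fin n → ℝ) → ℝ} :
    LipschitzL1With 1 f ↔ LipschitzL1 f := by
  simp only [LipschitzL1With, LipschitzL1, one_mul]

lemma lipschitzL1With_l1norm_sub {n : ℕ} (c : Fin n → ℝ) :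
    LipschitzL1With 1 (fun x => l1norm (x - c)) :=
  .of_le_add fun x y => by simpa only [one_mul] using l1norm_sub_le_l1norm_sub_add x y c

lemma lipschitzL1With_dotp {n : ℕ} (a : Fin n → ℝ) : LipschitzL1With (linfnorm a) (dotp a) :=
  fun x y => by
    simpa only [dotp_eq_dotProduct, dotProduct_sub] using abs_dotp_le_linfnorm_mul_l1norm a (x - y)

section Wasserstein

variable {n : ℕ} {Q₁ Q₂ : Measure (Fin n → ℝ)} [IsProbabilityMeasure Q₁] [IsProbabilityMeasure Q₂]

lemma integral_sub_integral_le_of_lipschitzL1 {f : (Fin n → ℝ) → ℝ} (hf : LipschitzL1 f)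
    (h₁ : Integrable l1norm Q₁) (h₂ : Integrable l1norm Q₂) :
    ∫ x, f x ∂Q₁ - ∫ x, f x ∂Q₂ ≤ ∫ x, l1norm x ∂Q₁ + ∫ x, l1norm x ∂Q₂ := by
  have hf' := lipschitzL1With_one_iff.mpr hf
  have upper : ∫ x, f x ∂Q₁ ≤ ∫ x, f 0 + l1norm x ∂Q₁ :=
    integral_mono (hf'.integrable zero_le_one h₁) ((integrable_const _).add h₁)
      fun x => by simpa only [sub_zero, one_mul] using hf'.le_add x 0
  have lower : ∫ x, f 0 - l1norm x ∂Q₂ ≤ ∫ x, f x ∂Q₂ :=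
    integral_mono ((integrable_const _).sub h₂) (hf'.integrable zero_le_one h₂)
      fun x => by
        have := hf'.le_add 0 x
        rw [l1norm_sub_comm, sub_zero, one_mul] at this
        linarith
  rw [integral_add (integrable_const _) h₁, integral_const, probReal_univ, one_smul] at upper
  rw [integral_sub (integrable_const _) h₂, integral_const, probReal_univ, one_smul] at lower
  linarith

lemma le_wassersteinL1 {f : (Fin n → ℝ) → ℝ} (hf : LipschitzL1 f)
    (h₁ : Integrable l1norm Q₁) (h₂ : Integrable l1norm Q₂) :
    ∫ x, f x ∂Q₁ - ∫ x, f x ∂Q₂ ≤ wassersteinL1 Q₁ Q₂ := by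
  refine le_csSup ⟨∫ x, l1norm x ∂Q₁ + ∫ x, l1norm x ∂Q₂, ?_⟩ ⟨f, hf, rfl⟩
  rintro r ⟨g, hg, rfl⟩
  exact integral_sub_integral_le_of_lipschitzL1 hg h₁ h₂

lemma LipschitzL1With.integral_sub_integral_le_mul_wassersteinL1 {L : ℝ}
    {f : (Fin n → ℝ) → ℝ} (hf : LipschitzL1With L f) (hL : 0 ≤ L)
    (h₁ : Integrable l1norm Q₁) (h₂ : Integrable l1norm Q₂) :
    ∫ x, f x ∂Q₁ - ∫ x, f x ∂Q₂ ≤ L * wassersteinL1 Q₁ Q₂ := by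
  rcases hL.eq_or_lt with rfl | hL
  · have hconst : f = fun _ => f 0 := funext fun x => by
      simpa [sub_eq_zero] using hf x 0
    rw [hconst]
    simp
  · have hfL : LipschitzL1 fun x => L⁻¹ * f x := lipschitzL1With_one_iff.mp <| by
      simpa only [inv_mul_cancel₀ hL.ne'] using hf.const_mul (inv_nonneg.mpr hL.le)
    have := le_wassersteinL1 hfL h₁ h₂
    rw [integral_const_mul, integral_const_mul, ← mul_sub, inv_mul_le_iff₀ hL] at this
    exact this

end Wasserstein

section Empirical

variable {α : Type*} [MeasurableSpace α] {N : ℕ}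

noncomputable def empiricalMeasure (x : Fin N → α) : Measure α :=
  (N : ℝ≥0∞)⁻¹ • ∑ i, Measure.dirac (x i)

lemma integral_empiricalMeasure [MeasurableSingletonClass α] (x : Fin N → α) (f : α → ℝ) :
    ∫ y, f y ∂empiricalMeasure x = (1 / N) * ∑ i, f (x i) := by
  rw [empiricalMeasure, integral_smul_measure, integral_finsetSum_measure fun i _ =>
    integrable_dirac enorm_lt_top]
  simp [integral_dirac]

lemma integrable_empiricalMeasure [MeasurableSingletonClass α] (hN : N ≠ 0) (x : Fin N → α)
    (f : α → ℝ) : Integrable f (empiricalMeasure x) :=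
  (integrable_finsetSum_measure.mpr fun _ _ => integrable_dirac enorm_lt_top).smul_measure
    (ENNReal.inv_ne_top.mpr (Nat.cast_ne_zero.mpr hN))

lemma isProbabilityMeasure_empiricalMeasure (hN : N ≠ 0) (x : Fin N → α) :
    IsProbabilityMeasure (empiricalMeasure x) := by
  constructor
  simp [empiricalMeasure, ENNReal.inv_mul_cancel (Nat.cast_ne_zero.mpr hN)]

end Empirical

lemma dotp_add_le_of_dual_feasible {n m : ℕ} {H : Matrix (Fin m) (Fin n) ℝ} {d : Fin m → ℝ}
    {ξ ξ₀ a : Fin n → ℝ} {ς : Fin m → ℝ} {b s lam : ℝ} (hξ : ∀ j, (H *ᵥ ξ) j ≤ d j)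
    (hς : ∀ j, 0 ≤ ς j) (hfeas1 : b + dotp a ξ₀ + dotp ς (d - H *ᵥ ξ₀) ≤ s)
    (hfeas2 : linfnorm (Hᵀ *ᵥ ς - a) ≤ lam) :
    dotp a ξ + b ≤ s + lam * l1norm (ξ - ξ₀) := by
  have slack : 0 ≤ dotp ς (d - H *ᵥ ξ) :=
    Finset.sum_nonneg fun j _ => mul_nonneg (hς j) (sub_nonneg.mpr (hξ j))
  have holder : |dotp (Hᵀ *ᵥ ς - a) (ξ - ξ₀)| ≤ lam * l1norm (ξ - ξ₀) :=
    (abs_dotp_le_linfnorm_mul_l1norm _ _).trans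
      (mul_le_mul_of_nonneg_right hfeas2 (l1norm_nonneg _))
  have decomposition : dotp a ξ + b = (b + dotp a ξ₀ + dotp ς (d - H *ᵥ ξ₀))
      - dotp ς (d - H *ᵥ ξ) - dotp (Hᵀ *ᵥ ς - a) (ξ - ξ₀) := by
    simp only [dotp_eq_dotProduct, dotProduct_sub, sub_dotProduct, Matrix.dotProduct_mulVec,
      Matrix.mulVec_transpose]
    ring
  linarith [neg_abs_le (dotp (Hᵀ *ᵥ ς - a) (ξ - ξ₀))]

theorem drso_reformulation_sound_general {n m N K : ℕ}
    (hN : 1 ≤ N) (hK : 1 ≤ K)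
    (H : Matrix (Fin m) (Fin n) ℝ) (d : Fin m → ℝ)
    (ξhat : Fin N → Fin n → ℝ)
    (Q : Measure (Fin n → ℝ)) [IsProbabilityMeasure Q]
    (hQsupp : ∀ᵐ ξ ∂Q, ∀ j, H.mulVec ξ j ≤ d j)
    (hQmom : Integrable (fun ξ => l1norm ξ) Q)
    (ε : ℝ)
    (hW : wassersteinL1 ((N : ℝ≥0∞)⁻¹ • ∑ i, Measure.dirac (ξhat i)) Q ≤ ε)
    (a : Fin K → Fin n → ℝ) (b : Fin K → ℝ)
    (lam : ℝ) (hlam : 0 ≤ lam) (s : Fin N → ℝ)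
    (ς : Fin N → Fin K → Fin m → ℝ) (hς : ∀ i k j, 0 ≤ ς i k j)
    (hfeas1 : ∀ i k,
      b k + dotp (a k) (ξhat i) + dotp (ς i k) (d - H.mulVec (ξhat i)) ≤ s i)
    (hfeas2 : ∀ i k, linfnorm (H.transpose.mulVec (ς i k) - a k) ≤ lam) :
    (∫ ξ, (⨆ k : Fin K, dotp (a k) ξ + b k) ∂Q) ≤ lam * ε + (1 / N) * ∑ i, s i := by
  change wassersteinL1 (empiricalMeasure ξhat) Q ≤ ε at hW
  have : Nonempty (Fin N) := ⟨⟨0, hN⟩⟩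
  have : Nonempty (Fin K) := ⟨⟨0, hK⟩⟩
  have hN₀ : N ≠ 0 := Nat.one_le_iff_ne_zero.mp hN
  have := isProbabilityMeasure_empiricalMeasure hN₀ ξhat
  let F : (Fin n → ℝ) → ℝ := fun ξ => ⨅ i, s i + lam * l1norm (ξ - ξhat i)
  have hF : LipschitzL1With lam F := .iInf fun i => by
    simpa only [mul_one] using
      ((lipschitzL1With_l1norm_sub (ξhat i)).const_mul hlam).const_add (s i)
  have hg : LipschitzL1With (⨆ k, linfnorm (a k)) fun ξ => ⨆ k, dotp (a k) ξ + b k :=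
    .iSup fun k => ((lipschitzL1With_dotp (a k)).add_const (b k)).mono <|
      le_ciSup (f := fun k => linfnorm (a k)) (Set.finite_range _).bddAbove k
  have hFhat : ∫ ξ, F ξ ∂empiricalMeasure ξhat ≤ (1 / N) * ∑ i, s i := by
    rw [integral_empiricalMeasure]
    gcongr with i
    simpa [F, l1norm] using
      ciInf_le (Set.finite_range fun j => s j + lam * l1norm (ξhat i - ξhat j)).bddBelow i
  have hFW : ∫ ξ, F ξ ∂Q - ∫ ξ, F ξ ∂empiricalMeasure ξhat ≤ lam * ε := by
    refine le_trans ?_ (mul_le_mul_of_nonneg_left hW hlam)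
    have := hF.neg.integral_sub_integral_le_mul_wassersteinL1 hlam
      (integrable_empiricalMeasure hN₀ ξhat l1norm) hQmom
    rw [integral_neg, integral_neg] at this
    linarith
  calc ∫ ξ, (⨆ k, dotp (a k) ξ + b k) ∂Q ≤ ∫ ξ, F ξ ∂Q :=
        integral_mono_ae (hg.integrable (Real.iSup_nonneg fun k => linfnorm_nonneg _) hQmom)
          (hF.integrable hlam hQmom) <| hQsupp.mono fun ξ hξ =>
            le_ciInf fun i => ciSup_le fun k =>
              dotp_add_le_of_dual_feasible hξ (hς i k) (hfeas1 i k) (hfeas2 i k)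
    _ ≤ lam * ε + (1 / N) * ∑ i, s i := by linarith

/-- Soundness (weak duality) of the tractable finite convex reformulation of the
distributionally robust stochastic OPF: any feasible point `(λ, sᵢ, ς_{ik})` of the
quadratic program certifies that `λε + (1/N)Σᵢ sᵢ` upper-bounds the expectation of the
piecewise-affine CVaR integrand under any distribution `Q` supported on the polytope `Ξ`
within Wasserstein distance `ε` of the empirical distribution of the samples. -/
theorem drso_reformulation_sound {n m N K : ℕ}
    (hn : 1 ≤ n) (hm : 1 ≤ m) (hN : 1 ≤ N) (hK : 1 ≤ K)
    (H : Matrix (Fin m) (Fin n) ℝ) (d : Fin m → ℝ)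
    (ξhat : Fin N → Fin n → ℝ)
    (hξhat : ∀ i j, H.mulVec (ξhat i) j ≤ d j)
    (Q : Measure (Fin n → ℝ)) [IsProbabilityMeasure Q]
    (hQsupp : ∀ᵐ ξ ∂Q, ∀ j, H.mulVec ξ j ≤ d j)
    (hQmom : Integrable (fun ξ => l1norm ξ) Q)
    (ε : ℝ) (hε : 0 ≤ ε)
    (hW : wassersteinL1 ((N : ℝ≥0∞)⁻¹ • ∑ i, Measure.dirac (ξhat i)) Q ≤ ε)
    (a : Fin K → Fin n → ℝ) (b : Fin K → ℝ)
    (lam : ℝ) (hlam : 0 ≤ lam) (s : Fin N → ℝ)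
    (ς : Fin N → Fin K → Fin m → ℝ) (hς : ∀ i k j, 0 ≤ ς i k j)
    (hfeas1 : ∀ i k,
      b k + dotp (a k) (ξhat i) + dotp (ς i k) (d - H.mulVec (ξhat i)) ≤ s i)
    (hfeas2 : ∀ i k, linfnorm (H.transpose.mulVec (ς i k) - a k) ≤ lam) :
    (∫ ξ, (⨆ k : Fin K, dotp (a k) ξ + b k) ∂Q) ≤ lam * ε + (1 / N) * ∑ i, s i :=
  drso_reformulation_sound_general hN hK H d ξhat Q hQsupp hQmom ε hW a b lam hlam s ς hς hfeas1
    hfeas2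
end
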